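/- Convolution theorem, type 3: for set functions h, s on the powerset of N, F₃(h ∗₃ s)_B = (F₁ h)_B · (F₃ s)_B for all B ⊆ N, where (h ∗₃ s)_A = Σ_{X⊆N} h_X s_{A\X}, (F₁ h)_B = Σ_{X∩B=∅} h_X, and (F₃ s)_B = Σ_{A⊆B} (−1)^{|A|} s_A. -/

import Mathlib

/-!
Expanding the convolution and exchanging sums, `F₃(h ∗₃ s)_B = Σ_X h_X · Σ_{A ⊆ B} (-1)^{|A|} s_{A \ X}`.
If some `a ∈ B` lies in `X`, then adding `a` to `A` leaves `A \ X` unchanged and flips the sign,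
so the inner sum cancels in pairs; if `X ∩ B = ∅`, then `A \ X = A` and the inner sum is `(F₃ s)_B`.
-/

open Finset

def conv3 {N : Type*} [Fintype N] [DecidableEq N] (h s : Finset N → ℝ) (A : Finset N) : ℝ :=
  ∑ X ∈ (univ : Finset N).powerset, h X * s (A \ X)

def dsft1 {N : Type*} [Fintype N] [DecidableEq N] (h : Finset N → ℝ) (B : Finset N) : ℝ :=
  ∑ X ∈ (univ : Finset N).powerset.filter (fun X => X ∩ B = ∅), h X

def dsft3 {N : Type*} [Fintype N] [DecidableEq N] (s : Finset N → ℝ) (B : Finset N) : ℝ :=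
  ∑ A ∈ B.powerset, (-1 : ℝ) ^ A.card * s A

section AlternatingSums

variable {α R : Type*} [DecidableEq α] [CommRing R]

theorem sum_powerset_neg_one_pow_card_mul_sdiff_of_mem {B X : Finset α} {a : α}
    (haB : a ∈ B) (haX : a ∈ X) (g : Finset α → R) :
    ∑ A ∈ B.powerset, (-1 : R) ^ #A * g (A \ X) = 0 := by
  rw [← insert_erase haB, sum_powerset_insert (notMem_erase a B), ← sum_add_distrib]
  refine sum_eq_zero fun A hA => ?_
  have haA : a ∉ A := fun ha => notMem_erase a B (mem_powerset.mp hA ha)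
  rw [insert_sdiff_of_mem A haX, card_insert_of_notMem haA, pow_succ]
  ring

theorem sum_powerset_neg_one_pow_card_mul_sdiff_of_disjoint {B X : Finset α}
    (hBX : Disjoint B X) (g : Finset α → R) :
    ∑ A ∈ B.powerset, (-1 : R) ^ #A * g (A \ X) = ∑ A ∈ B.powerset, (-1 : R) ^ #A * g A :=
  sum_congr rfl fun A hA => by
    rw [(hBX.mono_left (mem_powerset.mp hA)).sdiff_eq_left]

end AlternatingSums

section Transforms

variable {N : Type*} [Fintype N] [DecidableEq N]

theorem dsft3_comp_sdiff (s : Finset N → ℝ) (X B : Finset N) :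
    dsft3 (fun A => s (A \ X)) B = if X ∩ B = ∅ then dsft3 s B else 0 := by
  unfold dsft3
  split_ifs with hXB
  · exact sum_powerset_neg_one_pow_card_mul_sdiff_of_disjoint
      (disjoint_iff_inter_eq_empty.mpr hXB).symm s
  · obtain ⟨a, ha⟩ := nonempty_iff_ne_empty.mpr hXB
    exact sum_powerset_neg_one_pow_card_mul_sdiff_of_mem
      (mem_inter.mp ha).2 (mem_inter.mp ha).1 s

theorem dsft3_conv3 (h s : Finset N → ℝ) (B : Finset N) :
    dsft3 (conv3 h s) B = ∑ X ∈ (univ : Finset N).powerset, h X * dsft3 (fun A => s (A \ X)) B := by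
  simp only [dsft3, conv3, mul_sum]
  rw [sum_comm]
  exact sum_congr rfl fun X _ => sum_congr rfl fun A _ => mul_left_comm _ _ _

end Transforms

theorem conv_theorem_type3 {N : Type*} [Fintype N] [DecidableEq N]
    (h s : Finset N → ℝ) (B : Finset N) :
    dsft3 (conv3 h s) B = dsft1 h B * dsft3 s B := by
  simp only [dsft3_conv3, dsft3_comp_sdiff, mul_ite, mul_zero]
  rw [← sum_filter, dsft1, sum_mul]
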